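/- arXiv:1602.08580 — 6 statements merged into one kernel-verified Lean document; each statement's English description precedes it below -/
import Mathlib

section
/- For z ∈ ℂ with Re z ≥ 1 and ℓ ∈ ℕ₀, the polynomial p(x) = Σ_{k=0}^{ℓ} C(z+ℓ, k) x^k (1-x)^{ℓ-k} equals Σ_{k=0}^{ℓ} C(z-1+k, k) x^k for all x ∈ [0,1]. -/
open Complex Finset

/-- Generalized binomial coefficient `C(w, j) = Γ(w+1) / (Γ(j+1) Γ(w-j+1))`. -/
noncomputable def genBinom (w : ℂ) (j : ℕ) : ℂ :=
  Complex.Gamma (w + 1) / (Complex.Gamma ((j : ℂ) + 1) * Complex.Gamma (w - j + 1))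

/-!
Write `S_n(w, y) = ∑_{k ≤ n} C(w, k) y^k (1 - y)^(n - k)`. Splitting off the top term gives
`S_{n+1}(w, y) = (1 - y) S_n(w, y) + C(w, n+1) y^(n+1)`, while Pascal's rule
`C(w+1, k+1) = C(w, k+1) + C(w, k)` gives `S_{n+1}(w+1, y) = S_{n+1}(w, y) + y S_n(w, y)`.
Together, `S_{n+1}(w+1, y) = S_n(w, y) + C(w, n+1) y^(n+1)`, and induction on `ℓ` with
`w = z + ℓ` adds one term `C(z - 1 + k, k) y^k` at each step.
-/

section BernsteinSum

variable {R : Type*} [CommRing R]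

lemma sum_range_succ_mul_pow_one_sub (c : ℕ → R) (n : ℕ) (y : R) :
    ∑ k ∈ range (n + 2), c k * y ^ k * (1 - y) ^ (n + 1 - k)
      = (1 - y) * ∑ k ∈ range (n + 1), c k * y ^ k * (1 - y) ^ (n - k)
        + c (n + 1) * y ^ (n + 1) := by
  rw [sum_range_succ, mul_sum, Nat.sub_self, pow_zero, mul_one]
  congr 1
  refine sum_congr rfl fun k hk => ?_
  rw [Nat.sub_add_comm (Nat.lt_succ_iff.mp (mem_range.mp hk)), pow_succ]
  ring

lemma sum_range_succ_mul_pow_one_sub_of_pascal (c d : ℕ → R) (n : ℕ) (y : R) (h₀ : d 0 = c 0)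
    (hpascal : ∀ k ≤ n, d (k + 1) = c (k + 1) + c k) :
    ∑ k ∈ range (n + 2), d k * y ^ k * (1 - y) ^ (n + 1 - k)
      = ∑ k ∈ range (n + 1), c k * y ^ k * (1 - y) ^ (n - k) + c (n + 1) * y ^ (n + 1) := by
  have hsplit : ∑ k ∈ range (n + 2), d k * y ^ k * (1 - y) ^ (n + 1 - k)
      = ∑ k ∈ range (n + 2), c k * y ^ k * (1 - y) ^ (n + 1 - k)
        + y * ∑ k ∈ range (n + 1), c k * y ^ k * (1 - y) ^ (n - k) := by
    rw [sum_range_succ' _ (n + 1), sum_range_succ' (fun k => c k * _ * _) (n + 1), mul_sum,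
      h₀, add_right_comm, ← sum_add_distrib]
    congr 1
    refine sum_congr rfl fun k hk => ?_
    rw [hpascal k (Nat.lt_succ_iff.mp (mem_range.mp hk)), Nat.add_sub_add_right]
    ring
  rw [hsplit, sum_range_succ_mul_pow_one_sub]
  ring

end BernsteinSum

lemma genBinom_zero {w : ℂ} (hw : -1 < w.re) : genBinom w 0 = 1 := by
  have hΓ : Gamma (w + 1) ≠ 0 := Gamma_ne_zero_of_re_pos (by rw [add_re, one_re]; linarith)
  simp [genBinom, hΓ]

lemma genBinom_succ_succ {w : ℂ} {k : ℕ} (hk : (k : ℝ) < w.re) :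
    genBinom (w + 1) (k + 1) = genBinom w (k + 1) + genBinom w k := by
  have hwk : 0 < (w - k).re := by rw [sub_re, natCast_re]; linarith
  have hk1 : 0 < ((k : ℂ) + 1).re := by rw [add_re, natCast_re, one_re]; positivity
  have hw1 : 0 < (w + 1).re := by rw [add_re, one_re]; linarith [k.cast_nonneg (α := ℝ)]
  have hΓk := Gamma_ne_zero_of_re_pos hk1
  have hΓwk := Gamma_ne_zero_of_re_pos hwk
  have e₁ : w + 1 - ((k + 1 : ℕ) : ℂ) + 1 = w - k + 1 := by push_cast; ring
  have e₂ : w - ((k + 1 : ℕ) : ℂ) + 1 = w - k := by push_cast; ring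
  have e₃ : ((k + 1 : ℕ) : ℂ) + 1 = (k + 1) + 1 := by push_cast; ring
  simp only [genBinom, e₁, e₂, e₃, Gamma_add_one _ (ne_zero_of_re_pos hw1),
    Gamma_add_one _ (ne_zero_of_re_pos hk1), Gamma_add_one _ (ne_zero_of_re_pos hwk)]
  field_simp [ne_zero_of_re_pos hw1, ne_zero_of_re_pos hk1, ne_zero_of_re_pos hwk]
  ring

lemma sum_genBinom_add_mul_pow_one_sub (z : ℂ) (hz : 0 < z.re) (ℓ : ℕ) (y : ℂ) :
    ∑ k ∈ range (ℓ + 1), genBinom (z + ℓ) k * y ^ k * (1 - y) ^ (ℓ - k)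
      = ∑ k ∈ range (ℓ + 1), genBinom (z - 1 + k) k * y ^ k := by
  induction ℓ with
  | zero =>
    simp [genBinom_zero (w := z) (by linarith), genBinom_zero (w := z - 1) (by simpa using hz)]
  | succ n ih =>
    have hzn : (n : ℝ) < (z + n).re := by rw [add_re, natCast_re]; linarith
    have hre : ∀ k ≤ n, (k : ℝ) < (z + n).re := fun k hk =>
      lt_of_le_of_lt (Nat.cast_le.mpr hk) hzn
    rw [show z + ((n + 1 : ℕ) : ℂ) = z + n + 1 by push_cast; ring,
      sum_range_succ_mul_pow_one_sub_of_pascal (genBinom (z + n)) _ n y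
        (by rw [genBinom_zero (by rw [add_re, one_re]; linarith [n.cast_nonneg (α := ℝ)]),
          genBinom_zero (by linarith [n.cast_nonneg (α := ℝ)])])
        (fun k hk => genBinom_succ_succ (hre k hk)),
      ih, sum_range_succ _ (n + 1), show z - 1 + ((n + 1 : ℕ) : ℂ) = z + n by push_cast; ring]

theorem stmt2_general (z : ℂ) (hz : 1 ≤ z.re) (ℓ : ℕ) (x : ℝ) :
    (∑ k ∈ range (ℓ + 1), genBinom (z + ℓ) k * (x : ℂ) ^ k * ((1 : ℂ) - x) ^ (ℓ - k))
      = ∑ k ∈ range (ℓ + 1), genBinom (z - 1 + k) k * (x : ℂ) ^ k :=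
  sum_genBinom_add_mul_pow_one_sub z (by linarith) ℓ x

theorem stmt2 (z : ℂ) (hz : 1 ≤ z.re) (ℓ : ℕ) (x : ℝ) (hx : x ∈ Set.Icc (0:ℝ) 1) :
    (∑ k ∈ range (ℓ + 1), genBinom (z + ℓ) k * (x : ℂ) ^ k * ((1 : ℂ) - x) ^ (ℓ - k))
      = ∑ k ∈ range (ℓ + 1), genBinom (z - 1 + k) k * (x : ℂ) ^ k :=
  stmt2_general z hz ℓ x
end

section
/- Let z ∈ ℂ with Re z ≥ 1, ℓ ∈ ℕ₀, p(x) = Σ_{k=0}^{ℓ} C(z+ℓ, k) x^k (1-x)^{ℓ-k}, and q(x) = (1-x)^z p(x) for x ∈ (0,1). Then the derivative of q satisfies q'(x) = -(z+ℓ)·C(z-1+ℓ, ℓ)·x^ℓ (1-x)^{z-1}. -/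
/-!
Write `w = z + ℓ`. Multiplying in `(1-x)^z`, the function is `∑ₖ C(w,k) xᵏ (1-x)^(w-k)`, whose
`k`-th term has derivative `Pₖ - Nₖ` with `Pₖ = k C(w,k) xᵏ⁻¹ (1-x)^(w-k)` and
`Nₖ = (w-k) C(w,k) xᵏ (1-x)^(w-k-1)`. The identity `(k+1) C(w,k+1) = (w-k) C(w,k)` gives
`Pₖ₊₁ = Nₖ`, so the sum telescopes to `-N_ℓ`, and `(w-ℓ) C(w,ℓ) = w C(w-1,ℓ)` puts it in the
stated form. Both identities are `Γ(s+1) = s Γ(s)`, applicable since `Re (w - k) > 0` for `k ≤ ℓ`.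
-/

open Complex Finset

lemma add_natCast_sub_natCast_ne_zero {z : ℂ} (hz : 0 < z.re) {k n : ℕ} (hk : k ≤ n) :
    z + n - k ≠ 0 := fun h => by
  have := congrArg re h
  simp only [sub_re, add_re, natCast_re, zero_re] at this
  linarith [(Nat.cast_le (α := ℝ)).2 hk]

lemma Gamma_natCast_add_one_ne_zero (k : ℕ) : Gamma ((k : ℂ) + 1) ≠ 0 := by
  rw [Gamma_nat_eq_factorial]
  exact_mod_cast k.factorial_ne_zero

lemma succ_mul_genBinom_succ (w : ℂ) (k : ℕ) (hk : w - k ≠ 0) :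
    ((k : ℂ) + 1) * genBinom w (k + 1) = (w - k) * genBinom w k := by
  have hk1 : (k : ℂ) + 1 ≠ 0 := Nat.cast_add_one_ne_zero k
  have hΓk := Gamma_natCast_add_one_ne_zero k
  unfold genBinom
  push_cast
  rw [Gamma_add_one _ hk1, show w - ((k : ℂ) + 1) + 1 = w - k by ring, Gamma_add_one _ hk]
  -- `w - k` may still be a pole of `Γ`, where Mathlib's `Gamma` takes the value `0`.
  by_cases hΓ : Gamma (w - k) = 0
  · simp [hΓ]
  · field_simp

lemma sub_mul_genBinom (w : ℂ) (k : ℕ) (hw : w ≠ 0) (hk : w - k ≠ 0) :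
    (w - k) * genBinom w k = w * genBinom (w - 1) k := by
  unfold genBinom
  rw [Gamma_add_one _ hw, Gamma_add_one _ hk, sub_add_cancel,
    show w - 1 - k + 1 = w - k by ring]
  by_cases hΓ : Gamma (w - k) = 0
  · simp [hΓ]
  · have hΓk := Gamma_natCast_add_one_ne_zero k
    field_simp

lemma sum_range_succ_sub_of_succ_eq {M : Type*} [AddCommGroup M] (P N : ℕ → M) (n : ℕ)
    (h0 : P 0 = 0) (hsucc : ∀ k < n, P (k + 1) = N k) :
    ∑ k ∈ range (n + 1), (P k - N k) = -N n := by
  rw [sum_sub_distrib, sum_range_succ', sum_range_succ N, h0,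
    sum_congr rfl fun k hk => hsucc k (mem_range.1 hk)]
  abel

/-- `(1 - t) ^ a` for `t < 1`, through the real logarithm. -/
noncomputable def oneSubCpow (a : ℂ) (t : ℝ) : ℂ :=
  exp (a * Real.log (1 - t))

lemma oneSubCpow_mul_pow {t : ℝ} (ht : t < 1) (a : ℂ) (n : ℕ) :
    oneSubCpow a t * (1 - (t : ℂ)) ^ n = oneSubCpow (a + n) t := by
  have hexp : exp (Real.log (1 - t) : ℂ) = 1 - t := by
    rw [← ofReal_exp, Real.exp_log (by linarith)]
    push_cast
    rfl
  rw [oneSubCpow, oneSubCpow, ← hexp, ← exp_nat_mul, ← exp_add]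
  ring_nf

lemma oneSubCpow_mul_sum_mul_pow {t : ℝ} (ht : t < 1) (a : ℂ) (n : ℕ) (c : ℕ → ℂ) :
    oneSubCpow a t * ∑ k ∈ range (n + 1), c k * (t : ℂ) ^ k * (1 - (t : ℂ)) ^ (n - k) =
      ∑ k ∈ range (n + 1), c k * (t : ℂ) ^ k * oneSubCpow (a + n - k) t := by
  rw [mul_sum]
  refine sum_congr rfl fun k hk => ?_
  rw [show a + n - k = a + ((n - k : ℕ) : ℂ) by
    rw [Nat.cast_sub (Nat.lt_succ_iff.1 (mem_range.1 hk))]; ring, ← oneSubCpow_mul_pow ht]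
  ring

lemma hasDerivAt_oneSubCpow (a : ℂ) {x : ℝ} (hx : x < 1) :
    HasDerivAt (oneSubCpow a) (-a * oneSubCpow (a - 1) x) x := by
  have hlog : HasDerivAt (fun t : ℝ => (Real.log (1 - t) : ℂ)) (-oneSubCpow (-1) x) x := by
    convert (((hasDerivAt_id' x).const_sub 1).log (sub_ne_zero.2 hx.ne')).ofReal_comp using 1
    rw [oneSubCpow, neg_one_mul, exp_neg, ← ofReal_exp, Real.exp_log (by linarith)]
    push_cast
    ring
  refine (hlog.const_mul a).cexp.congr_deriv ?_
  simp only [oneSubCpow]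
  rw [mul_neg, mul_neg, mul_left_comm, ← exp_add]
  ring_nf

lemma hasDerivAt_mul_pow_mul_oneSubCpow (c a : ℂ) (k : ℕ) {x : ℝ} (hx : x < 1) :
    HasDerivAt (fun t : ℝ => c * (t : ℂ) ^ k * oneSubCpow a t)
      (c * k * (x : ℂ) ^ (k - 1) * oneSubCpow a x - c * a * (x : ℂ) ^ k * oneSubCpow (a - 1) x)
      x := by
  have hpow : HasDerivAt (fun t : ℝ => (t : ℂ) ^ k) (k * (x : ℂ) ^ (k - 1)) x := by
    simpa using (hasDerivAt_pow k x).ofReal_comp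
  refine ((hpow.const_mul c).mul (hasDerivAt_oneSubCpow a hx)).congr_deriv ?_
  ring

theorem stmt3 (z : ℂ) (hz : 1 ≤ z.re) (ℓ : ℕ) (x : ℝ) (hx : x ∈ Set.Ioo (0:ℝ) 1) :
    HasDerivAt
      (fun t : ℝ => Complex.exp (z * Real.log (1 - t)) *
        ∑ k ∈ range (ℓ + 1), genBinom (z + ℓ) k * (t : ℂ) ^ k * ((1 : ℂ) - t) ^ (ℓ - k))
      (-(z + ℓ) * genBinom (z - 1 + ℓ) ℓ * (x : ℂ) ^ ℓ *
        Complex.exp ((z - 1) * Real.log (1 - x))) x := by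
  set w : ℂ := z + ℓ
  have hwk : ∀ k ≤ ℓ, w - k ≠ 0 := fun k =>
    add_natCast_sub_natCast_ne_zero (by linarith)
  have hderiv := HasDerivAt.fun_sum fun k (_ : k ∈ range (ℓ + 1)) =>
    hasDerivAt_mul_pow_mul_oneSubCpow (genBinom w k) (w - k) k hx.2
  refine (hderiv.congr_of_eventuallyEq ?_).congr_deriv <|
    (sum_range_succ_sub_of_succ_eq
      (fun k => genBinom w k * k * (x : ℂ) ^ (k - 1) * oneSubCpow (w - k) x)
      (fun k => genBinom w k * (w - k) * (x : ℂ) ^ k * oneSubCpow (w - k - 1) x) ℓ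
      (by simp) fun k hk => ?_).trans ?_
  · filter_upwards [Iio_mem_nhds hx.2] with t ht
    exact oneSubCpow_mul_sum_mul_pow ht z ℓ (genBinom w)
  · have := succ_mul_genBinom_succ w k (hwk k hk.le)
    push_cast
    rw [show w - (k + 1) = w - k - 1 by ring]
    linear_combination ((x : ℂ) ^ k * oneSubCpow (w - k - 1) x) * this
  · have := sub_mul_genBinom w ℓ (by simpa using hwk 0 ℓ.zero_le) (hwk ℓ le_rfl)
    change _ = _ * oneSubCpow (z - 1) x
    rw [show w - ℓ - 1 = z - 1 by ring, show z - 1 + ℓ = w - 1 by ring]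
    linear_combination (-(x : ℂ) ^ ℓ * oneSubCpow (z - 1) x) * this
end

section
/- Let z = x + iy with x ≥ 1 real, and k ≥ 1 an integer such that Σ_{j=0}^{k-1} arctan(y/(x+j)) ∈ (-π/2, π/2). Then Re( ∏_{j=0}^{k-1} (z+j) ) ≥ 0, and consequently Re C(z-1+k, k) ≥ 0. -/
/-!
Every factor `z + j` lies in the right half-plane, so its argument is `arctan (y / (x + j))`.
Multiplying the polar forms, the product is `(∏ ‖z + j‖) · exp (iθ)` with `θ` the given sum of
arctangents, and its real part `(∏ ‖z + j‖) cos θ` is nonnegative since `|θ| < π/2`.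
Dividing by `k! > 0` keeps the sign.
-/

open Complex Finset Real

/-- Generalized binomial coefficient `C(z-1+k, k) = (∏_{j=0}^{k-1} (z+j)) / k!`. -/
noncomputable def genBinomProd (z : ℂ) (k : ℕ) : ℂ :=
  (∏ j ∈ range k, (z + j)) / (k.factorial : ℂ)

namespace Complex

theorem arg_eq_arctan_of_re_pos {w : ℂ} (hw : 0 < w.re) : arg w = Real.arctan (w.im / w.re) := by
  obtain ⟨hlo, hhi⟩ := abs_lt.mp (abs_arg_lt_pi_div_two_iff.mpr (Or.inl hw))
  rw [← tan_arg, Real.arctan_tan hlo hhi]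

theorem prod_eq_prod_norm_mul_exp_sum_arg {ι : Type*} (s : Finset ι) (f : ι → ℂ) :
    ∏ i ∈ s, f i = (∏ i ∈ s, ‖f i‖ : ℝ) * exp ((∑ i ∈ s, arg (f i) : ℝ) * I) := by
  push_cast
  rw [Finset.sum_mul, exp_sum, ← Finset.prod_mul_distrib]
  exact Finset.prod_congr rfl fun i _ => (norm_mul_exp_arg_mul_I (f i)).symm

theorem re_prod_nonneg_of_sum_arg_mem_Icc {ι : Type*} (s : Finset ι) (f : ι → ℂ)
    (h : ∑ i ∈ s, arg (f i) ∈ Set.Icc (-(π / 2)) (π / 2)) : 0 ≤ (∏ i ∈ s, f i).re := by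
  rw [prod_eq_prod_norm_mul_exp_sum_arg, re_ofReal_mul, exp_ofReal_mul_I_re]
  exact mul_nonneg (Finset.prod_nonneg fun i _ => norm_nonneg _) (Real.cos_nonneg_of_mem_Icc h)

end Complex

theorem stmt12_general (z : ℂ) (hx : 1 ≤ z.re) (k : ℕ)
    (h : (∑ j ∈ range k, Real.arctan (z.im / (z.re + j))) ∈ Set.Ioo (-(π / 2)) (π / 2)) :
    0 ≤ (∏ j ∈ range k, (z + j)).re ∧ 0 ≤ (genBinomProd z k).re := by
  have harg (j : ℕ) : arg (z + j) = Real.arctan (z.im / (z.re + j)) := by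
    have hre : 0 < (z + j).re := by simp only [add_re, natCast_re]; positivity
    simpa using arg_eq_arctan_of_re_pos hre
  have hprod : 0 ≤ (∏ j ∈ range k, (z + j)).re := by
    refine re_prod_nonneg_of_sum_arg_mem_Icc _ _ ?_
    simp only [harg]
    exact Set.Ioo_subset_Icc_self h
  refine ⟨hprod, ?_⟩
  rw [genBinomProd, div_natCast_re]
  positivity

theorem stmt12 (z : ℂ) (hx : 1 ≤ z.re) (k : ℕ) (hk : 1 ≤ k)
    (h : (∑ j ∈ range k, Real.arctan (z.im / (z.re + j))) ∈ Set.Ioo (-(π / 2)) (π / 2)) :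
    0 ≤ (∏ j ∈ range k, (z + j)).re ∧ 0 ≤ (genBinomProd z k).re :=
  stmt12_general z hx k h
end

section
/- For real α ≥ 1 and integer 0 ≤ ℓ ≤ ⌊α - 1/2⌋, let p(t) = Σ_{k=0}^{ℓ} C(α-1+k, k) t^k. Then p(t)·p(4t(1-t)) ≤ p(3/4)² for all t ∈ [3/4, 1]. -/
/-!
With `s = 4t(1-t) ≤ t`, the derivative of `g(t) = p(t) p(s)` is `p'(t) p(s) - (8t - 4) p(t) p'(s)`,
so `g` decreases on `[3/4, 1]` as soon as `p'(t) p(s) ≤ 2 p(t) p'(s)`. Write `q(t) = p(t) - C_ℓ t^ℓ`.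
Termwise, `p'(t) = ∑_{k<ℓ} (α + k) C_k t^k` lies between `α q(t)` and `(α + ℓ) q(t)`, and
`q/p = 1 - C_ℓ t^ℓ / p(t)` is decreasing because `t^ℓ / p(t)` is increasing. Hence
`p'(t) p(s) ≤ (α + ℓ) q(t) p(s) ≤ (α + ℓ) p(t) q(s) ≤ 2α p(t) q(s) ≤ 2 p(t) p'(s)`, using `ℓ ≤ α`.
-/

open Finset

/-- Real generalized binomial coefficient `C(α-1+k, k) = (∏_{j=0}^{k-1} (α+j)) / k!`. -/
noncomputable def genBinomR (α : ℝ) (k : ℕ) : ℝ :=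
  (∏ j ∈ range k, (α + j)) / (k.factorial : ℝ)

/-- The polynomial `p(t) = ∑_{k=0}^ℓ C(α-1+k,k) t^k`. -/
noncomputable def pPoly (α : ℝ) (ℓ : ℕ) (t : ℝ) : ℝ :=
  ∑ k ∈ range (ℓ + 1), genBinomR α k * t ^ k

lemma pow_mul_sum_le_pow_mul_sum {c : ℕ → ℝ} (hc : ∀ k, 0 ≤ c k) (n : ℕ) {s t : ℝ}
    (hs : 0 ≤ s) (hst : s ≤ t) :
    s ^ n * ∑ k ∈ range (n + 1), c k * t ^ k ≤ t ^ n * ∑ k ∈ range (n + 1), c k * s ^ k := by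
  rw [mul_sum, mul_sum]
  refine sum_le_sum fun k hk => ?_
  obtain ⟨m, rfl⟩ := Nat.exists_eq_add_of_le (Nat.lt_succ_iff.mp (mem_range.mp hk))
  have hcst : 0 ≤ c k * s ^ k * t ^ k :=
    mul_nonneg (mul_nonneg (hc k) (pow_nonneg hs k)) (pow_nonneg (hs.trans hst) k)
  calc s ^ (k + m) * (c k * t ^ k) = c k * s ^ k * t ^ k * s ^ m := by ring
    _ ≤ c k * s ^ k * t ^ k * t ^ m := by gcongr
    _ = t ^ (k + m) * (c k * s ^ k) := by ring

variable {α : ℝ}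

lemma genBinomR_nonneg (hα : 0 ≤ α) (k : ℕ) : 0 ≤ genBinomR α k :=
  div_nonneg (prod_nonneg fun j _ => by positivity) (Nat.cast_nonneg _)

lemma genBinomR_succ (k : ℕ) :
    ((k : ℝ) + 1) * genBinomR α (k + 1) = (α + k) * genBinomR α k := by
  unfold genBinomR
  rw [prod_range_succ, Nat.factorial_succ]
  have : (k.factorial : ℝ) ≠ 0 := by positivity
  push_cast
  field_simp

lemma pPoly_nonneg (hα : 0 ≤ α) (ℓ : ℕ) {x : ℝ} (hx : 0 ≤ x) : 0 ≤ pPoly α ℓ x :=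
  sum_nonneg fun k _ => mul_nonneg (genBinomR_nonneg hα k) (pow_nonneg hx k)

lemma pPoly_sub_mul_pPoly_le (hα : 0 ≤ α) (ℓ : ℕ) {s x : ℝ} (hs : 0 ≤ s) (hsx : s ≤ x) :
    (pPoly α ℓ x - genBinomR α ℓ * x ^ ℓ) * pPoly α ℓ s ≤
      pPoly α ℓ x * (pPoly α ℓ s - genBinomR α ℓ * s ^ ℓ) := by
  have h := mul_le_mul_of_nonneg_left
    (pow_mul_sum_le_pow_mul_sum (genBinomR_nonneg hα) ℓ hs hsx) (genBinomR_nonneg hα ℓ)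
  unfold pPoly
  linarith

-- `p'` reindexed through `(k + 1) C(α+k, k+1) = (α + k) C(α-1+k, k)`.
noncomputable def pPolyDeriv (α : ℝ) (ℓ : ℕ) (t : ℝ) : ℝ :=
  ∑ k ∈ range ℓ, (α + k) * genBinomR α k * t ^ k

lemma hasDerivAt_pPoly (α : ℝ) (ℓ : ℕ) (x : ℝ) :
    HasDerivAt (pPoly α ℓ) (pPolyDeriv α ℓ x) x := by
  have h : HasDerivAt (pPoly α ℓ) (∑ k ∈ range (ℓ + 1), genBinomR α k * (k * x ^ (k - 1))) x :=
    HasDerivAt.fun_sum fun k _ => (hasDerivAt_pow k x).const_mul _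
  convert h using 1
  rw [sum_range_succ', Nat.cast_zero, zero_mul, mul_zero, add_zero]
  refine sum_congr rfl fun k _ => ?_
  rw [Nat.add_sub_cancel, ← genBinomR_succ]
  push_cast
  ring

lemma pPolyDeriv_nonneg (hα : 0 ≤ α) (ℓ : ℕ) {x : ℝ} (hx : 0 ≤ x) : 0 ≤ pPolyDeriv α ℓ x :=
  sum_nonneg fun k _ => mul_nonneg (mul_nonneg (by positivity) (genBinomR_nonneg hα k))
    (pow_nonneg hx k)

lemma mul_pPoly_sub_le_two_mul_pPolyDeriv (ℓ : ℕ) (hℓ : (ℓ : ℝ) ≤ α) {x : ℝ} (hx : 0 ≤ x) :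
    (α + ℓ) * (pPoly α ℓ x - genBinomR α ℓ * x ^ ℓ) ≤ 2 * pPolyDeriv α ℓ x := by
  have hα : 0 ≤ α := (Nat.cast_nonneg ℓ).trans hℓ
  rw [pPoly, sum_range_succ, add_sub_cancel_right, mul_sum, pPolyDeriv, mul_sum]
  refine sum_le_sum fun k _ => ?_
  have := mul_nonneg (genBinomR_nonneg hα k) (pow_nonneg hx k)
  nlinarith [(Nat.cast_nonneg k : (0 : ℝ) ≤ k)]

lemma pPolyDeriv_le_mul_pPoly_sub (hα : 0 ≤ α) (ℓ : ℕ) {x : ℝ} (hx : 0 ≤ x) :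
    pPolyDeriv α ℓ x ≤ (α + ℓ) * (pPoly α ℓ x - genBinomR α ℓ * x ^ ℓ) := by
  rw [pPoly, sum_range_succ, add_sub_cancel_right, mul_sum]
  refine sum_le_sum fun k hk => ?_
  have hkℓ : (k : ℝ) ≤ ℓ := by exact_mod_cast (mem_range.mp hk).le
  have := mul_nonneg (genBinomR_nonneg hα k) (pow_nonneg hx k)
  nlinarith

lemma pPolyDeriv_mul_pPoly_le (ℓ : ℕ) (hℓ : (ℓ : ℝ) ≤ α) {s x : ℝ} (hs : 0 ≤ s) (hsx : s ≤ x) :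
    pPolyDeriv α ℓ x * pPoly α ℓ s ≤ 2 * (pPoly α ℓ x * pPolyDeriv α ℓ s) := by
  have hα : 0 ≤ α := (Nat.cast_nonneg ℓ).trans hℓ
  have hx : 0 ≤ x := hs.trans hsx
  calc pPolyDeriv α ℓ x * pPoly α ℓ s
      ≤ (α + ℓ) * (pPoly α ℓ x - genBinomR α ℓ * x ^ ℓ) * pPoly α ℓ s :=
        mul_le_mul_of_nonneg_right (pPolyDeriv_le_mul_pPoly_sub hα ℓ hx) (pPoly_nonneg hα ℓ hs)
    _ ≤ (α + ℓ) * (pPoly α ℓ x * (pPoly α ℓ s - genBinomR α ℓ * s ^ ℓ)) := by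
        rw [mul_assoc]
        exact mul_le_mul_of_nonneg_left (pPoly_sub_mul_pPoly_le hα ℓ hs hsx) (by positivity)
    _ = pPoly α ℓ x * ((α + ℓ) * (pPoly α ℓ s - genBinomR α ℓ * s ^ ℓ)) := by ring
    _ ≤ pPoly α ℓ x * (2 * pPolyDeriv α ℓ s) :=
        mul_le_mul_of_nonneg_left (mul_pPoly_sub_le_two_mul_pPolyDeriv ℓ hℓ hs)
          (pPoly_nonneg hα ℓ hx)
    _ = 2 * (pPoly α ℓ x * pPolyDeriv α ℓ s) := by ring

lemma antitoneOn_pPoly_mul_pPoly_logistic (ℓ : ℕ) (hℓ : (ℓ : ℝ) ≤ α) :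
    AntitoneOn (fun t => pPoly α ℓ t * pPoly α ℓ (4 * t * (1 - t))) (Set.Icc (3/4) 1) := by
  have hα : 0 ≤ α := (Nat.cast_nonneg ℓ).trans hℓ
  have hlogistic (x : ℝ) : HasDerivAt (fun t : ℝ => 4 * t * (1 - t)) (4 - 8 * x) x :=
    (((hasDerivAt_id' x).const_mul 4).fun_mul ((hasDerivAt_id' x).const_sub 1)).congr_deriv
      (by ring)
  have hderiv (x : ℝ) : HasDerivAt (fun t => pPoly α ℓ t * pPoly α ℓ (4 * t * (1 - t)))
      (pPolyDeriv α ℓ x * pPoly α ℓ (4 * x * (1 - x)) +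
        pPoly α ℓ x * (pPolyDeriv α ℓ (4 * x * (1 - x)) * (4 - 8 * x))) x :=
    (hasDerivAt_pPoly α ℓ x).mul ((hasDerivAt_pPoly α ℓ _).comp x (hlogistic x))
  refine antitoneOn_of_hasDerivWithinAt_nonpos (convex_Icc _ _)
    (HasDerivAt.continuousOn fun x _ => hderiv x) (fun x _ => (hderiv x).hasDerivWithinAt) ?_
  rw [interior_Icc]
  rintro x ⟨hx₁, hx₂⟩
  have hs : 0 ≤ 4 * x * (1 - x) := by nlinarith
  have hsx : 4 * x * (1 - x) ≤ x := by nlinarith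
  have hprod := mul_nonneg (pPoly_nonneg hα ℓ (hs.trans hsx)) (pPolyDeriv_nonneg hα ℓ hs)
  nlinarith [pPolyDeriv_mul_pPoly_le ℓ hℓ hs hsx]

theorem stmt15_general (α : ℝ) (ℓ : ℕ) (hℓ : (ℓ : ℝ) ≤ α - 1/2) :
    ∀ t ∈ Set.Icc (3/4 : ℝ) 1,
      pPoly α ℓ t * pPoly α ℓ (4 * t * (1 - t)) ≤ pPoly α ℓ (3/4) ^ 2 := by
  intro t ht
  have h := antitoneOn_pPoly_mul_pPoly_logistic ℓ (by linarith : (ℓ : ℝ) ≤ α)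
    (Set.left_mem_Icc.mpr (by norm_num)) ht ht.1
  norm_num at h
  rwa [sq]

theorem stmt15 (α : ℝ) (hα : 1 ≤ α) (ℓ : ℕ) (hℓ : (ℓ : ℝ) ≤ α - 1/2) :
    ∀ t ∈ Set.Icc (3/4 : ℝ) 1,
      pPoly α ℓ t * pPoly α ℓ (4 * t * (1 - t)) ≤ pPoly α ℓ (3/4) ^ 2 :=
  stmt15_general α ℓ hℓ
end

section
/- Let H₀ be a 1-periodic measurable function on ℝ satisfying |H₀(γ)|² + |H₀(γ+1/2)|² ≤ 1 for a.e. γ, and define φ̂_m(γ) = χ_{[-2^{m-1}, 2^{m-1}]}(γ) ∏_{j=1}^{m} H₀(2^{-j}γ). Then ‖φ̂_{m+1}‖_{L²} ≤ ‖φ̂_m‖_{L²} for all m, and hence ‖φ̂_m‖_{L²} ≤ 1 for all m ∈ ℕ (with φ̂₀ = χ_{[-1/2,1/2]}). -/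
/-!
The squared L² norm of `φ̂_m` is the integral of `P_m(γ) = ∏_{j ≤ m} |H₀(2^{-j} γ)|²` over an
interval of length `2^m`, and `P_m` is `2^m`-periodic. Since `P_{m+1}(γ) = P_m(γ) |H₀(2^{-m-1} γ)|²`,
shifting the right half of `[-2^m, 2^m]` by `-2^m` pairs `|H₀(2^{-m-1} γ)|²` with
`|H₀(2^{-m-1} γ + 1/2)|²`; the bound on their sum leaves `∫_{-2^m}^0 P_m`, which by periodicity is
`‖φ̂_m‖²`. Induction from `‖φ̂_0‖² = 1` gives the bound by `1`.
-/

open MeasureTheory Finset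

/-- The cascade-algorithm approximants in the Fourier domain:
`φ̂_m(γ) = χ_{[-2^{m-1}, 2^{m-1}]}(γ) ∏_{j=1}^m H₀(2^{-j} γ)`
(for `m = 0` the empty product gives `φ̂₀ = χ_{[-1/2,1/2]}`). -/
noncomputable def cascadeFT (H₀ : ℝ → ℂ) (m : ℕ) : ℝ → ℂ :=
  Set.indicator (Set.Icc (-(2:ℝ) ^ ((m : ℤ) - 1)) ((2:ℝ) ^ ((m : ℤ) - 1)))
    (fun γ => ∏ j ∈ Finset.Icc 1 m, H₀ ((2:ℝ) ^ (-(j : ℤ)) * γ))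

open Function Set
open scoped ENNReal

section Periodic

variable {f g : ℝ → ℝ≥0∞} {T : ℝ}

theorem Function.Periodic.setLIntegral_Ioc_eq (hf : Periodic f T) (hT : 0 < T) (s t : ℝ) :
    ∫⁻ x in Ioc s (s + T), f x = ∫⁻ x in Ioc t (t + T), f x :=
  (isAddFundamentalDomain_Ioc hT s).setLIntegral_eq (isAddFundamentalDomain_Ioc hT t) f
    fun ⟨_, n, rfl⟩ x => by simpa [add_comm] using hf.zsmul n x

theorem setLIntegral_Ioc_comp_add_right (f : ℝ → ℝ≥0∞) (a b c : ℝ) :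
    ∫⁻ x in Ioc a b, f (x + c) = ∫⁻ x in Ioc (a + c) (b + c), f x := by
  simpa using (measurePreserving_add_right volume c).setLIntegral_comp_preimage_emb
    (measurableEmbedding_addRight c) f (Ioc (a + c) (b + c))

theorem Function.Periodic.setLIntegral_Ioc_mul_le (hf : Periodic f T) (hT : 0 ≤ T)
    (hfm : Measurable f) (hgm : Measurable g) (hg : ∀ᵐ x, g x + g (x + T) ≤ 1) (t : ℝ) :
    ∫⁻ x in Ioc t (t + T + T), f x * g x ≤ ∫⁻ x in Ioc t (t + T), f x :=
  calc ∫⁻ x in Ioc t (t + T + T), f x * g x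
      = (∫⁻ x in Ioc t (t + T), f x * g x) + ∫⁻ x in Ioc (t + T) (t + T + T), f x * g x := by
        rw [← Ioc_union_Ioc_eq_Ioc (b := t + T) (by linarith) (by linarith),
          lintegral_union measurableSet_Ioc (Ioc_disjoint_Ioc_of_le le_rfl)]
    _ = (∫⁻ x in Ioc t (t + T), f x * g x) + ∫⁻ x in Ioc t (t + T), f x * g (x + T) := by
        rw [← setLIntegral_Ioc_comp_add_right (fun x => f x * g x) t (t + T) T]
        congr 1
        exact lintegral_congr fun x => by rw [hf x]
    _ = ∫⁻ x in Ioc t (t + T), f x * (g x + g (x + T)) := by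
        have hfg : Measurable fun x => f x * g x := hfm.mul hgm
        rw [← lintegral_add_left hfg]
        simp only [mul_add]
    _ ≤ ∫⁻ x in Ioc t (t + T), f x :=
        lintegral_mono_ae <| (ae_restrict_of_ae hg).mono fun x hx =>
          mul_le_of_le_one_right' hx

end Periodic

theorem ae_comp_const_mul {p : ℝ → Prop} (hp : ∀ᵐ x, p x) {c : ℝ} (hc : c ≠ 0) :
    ∀ᵐ x, p (c * x) := by
  rw [ae_iff] at hp ⊢
  exact (Real.volume_preimage_mul_left hc _).trans (by rw [hp, mul_zero])

noncomputable def cascadeDensity (H₀ : ℝ → ℂ) (m : ℕ) (γ : ℝ) : ℝ≥0∞ :=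
  ∏ j ∈ Finset.Icc 1 m, ‖H₀ ((2:ℝ) ^ (-(j : ℤ)) * γ)‖ₑ ^ 2

noncomputable def cascadeEnergy (H₀ : ℝ → ℂ) (m : ℕ) : ℝ≥0∞ :=
  ∫⁻ γ in Ioc (-(2:ℝ) ^ ((m : ℤ) - 1)) ((2:ℝ) ^ ((m : ℤ) - 1)), cascadeDensity H₀ m γ

section Cascade

variable {H₀ : ℝ → ℂ}

theorem cascadeDensity_zero : cascadeDensity H₀ 0 = 1 := by
  ext; simp [cascadeDensity]

theorem cascadeDensity_succ (m : ℕ) (γ : ℝ) :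
    cascadeDensity H₀ (m + 1) γ =
      cascadeDensity H₀ m γ * ‖H₀ ((2:ℝ) ^ (-((m + 1 : ℕ) : ℤ)) * γ)‖ₑ ^ 2 :=
  prod_Icc_succ_top (by omega) _

theorem measurable_cascadeDensity (hmeas : Measurable H₀) (m : ℕ) :
    Measurable (cascadeDensity H₀ m) :=
  Finset.measurable_prod _ fun _ _ => (hmeas.comp (measurable_const_mul _)).enorm.pow_const 2

theorem periodic_cascadeDensity (hper : Periodic H₀ 1) (m : ℕ) :
    Periodic (cascadeDensity H₀ m) (2 ^ m) := by
  intro γ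
  refine prod_congr rfl fun j hj => ?_
  have hjm : j ≤ m := (Finset.mem_Icc.mp hj).2
  have hshift : (2:ℝ) ^ (-(j : ℤ)) * (γ + 2 ^ m) = (2:ℝ) ^ (-(j : ℤ)) * γ + (2 ^ (m - j) : ℕ) := by
    rw [mul_add, ← zpow_natCast, ← zpow_add₀ two_ne_zero]
    push_cast
    rw [← zpow_natCast, Nat.cast_sub hjm]
    ring_nf
  rw [hshift, ← mul_one ((2 ^ (m - j) : ℕ) : ℝ), hper.nat_mul]

theorem eLpNorm_cascadeFT (m : ℕ) :
    eLpNorm (cascadeFT H₀ m) 2 volume = cascadeEnergy H₀ m ^ (1 / 2 : ℝ) := by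
  rw [eLpNorm_eq_lintegral_rpow_enorm_toReal two_ne_zero ENNReal.ofNat_ne_top, cascadeEnergy,
    Measure.restrict_congr_set Ioc_ae_eq_Icc, ← lintegral_indicator measurableSet_Icc]
  congr 2 with γ
  by_cases hγ : γ ∈ Icc (-(2:ℝ) ^ ((m : ℤ) - 1)) ((2:ℝ) ^ ((m : ℤ) - 1)) <;>
    simp [cascadeFT, cascadeDensity, hγ, enorm_eq_nnnorm, nnnorm_prod, Finset.prod_pow]

theorem ae_enorm_sq_add_enorm_sq_le_one
    (hbound : ∀ᵐ γ : ℝ, ‖H₀ γ‖ ^ 2 + ‖H₀ (γ + 1/2)‖ ^ 2 ≤ 1) :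
    ∀ᵐ γ : ℝ, ‖H₀ γ‖ₑ ^ 2 + ‖H₀ (γ + 1/2)‖ₑ ^ 2 ≤ 1 :=
  hbound.mono fun γ h => by
    rw [← ofReal_norm, ← ofReal_norm, ← ENNReal.ofReal_pow (norm_nonneg _),
      ← ENNReal.ofReal_pow (norm_nonneg _), ← ENNReal.ofReal_add (by positivity) (by positivity)]
    exact ENNReal.ofReal_le_one.mpr h

theorem cascadeEnergy_zero : cascadeEnergy H₀ 0 = 1 := by
  norm_num [cascadeEnergy, cascadeDensity_zero]

theorem cascadeEnergy_succ_le (hmeas : Measurable H₀) (hper : Periodic H₀ 1)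
    (hbound : ∀ᵐ γ : ℝ, ‖H₀ γ‖ₑ ^ 2 + ‖H₀ (γ + 1/2)‖ₑ ^ 2 ≤ 1) (m : ℕ) :
    cascadeEnergy H₀ (m + 1) ≤ cascadeEnergy H₀ m := by
  set T : ℝ := 2 ^ m
  set a : ℝ := 2 ^ ((m : ℤ) - 1)
  set c : ℝ := 2 ^ (-((m + 1 : ℕ) : ℤ))
  have hT : (2:ℝ) ^ (((m + 1 : ℕ) : ℤ) - 1) = T := by push_cast; simp [T]
  have haT : -a + T = a := by
    rw [show T = 2 ^ ((m : ℤ) - 1) * 2 by rw [zpow_sub_one₀ two_ne_zero]; simp [T]]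
    ring
  have hcT : c * T = 1 / 2 := by
    rw [show T = (2:ℝ) ^ (m : ℤ) from (zpow_natCast 2 m).symm, ← zpow_add₀ two_ne_zero,
      show -((m + 1 : ℕ) : ℤ) + m = -1 by omega]
    norm_num
  have hg : ∀ᵐ x, ‖H₀ (c * x)‖ₑ ^ 2 + ‖H₀ (c * (x + T))‖ₑ ^ 2 ≤ 1 := by
    simpa only [mul_add, hcT] using ae_comp_const_mul hbound (c := c) (by positivity)
  calc cascadeEnergy H₀ (m + 1)
      = ∫⁻ x in Ioc (-T) (-T + T + T), cascadeDensity H₀ m x * ‖H₀ (c * x)‖ₑ ^ 2 := by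
        simp only [cascadeEnergy, hT, cascadeDensity_succ, neg_add_cancel, zero_add]
        rfl
    _ ≤ ∫⁻ x in Ioc (-T) (-T + T), cascadeDensity H₀ m x :=
        (periodic_cascadeDensity hper m).setLIntegral_Ioc_mul_le (by positivity)
          (measurable_cascadeDensity hmeas m)
          ((hmeas.comp (measurable_const_mul c)).enorm.pow_const 2) hg (-T)
    _ = ∫⁻ x in Ioc (-a) (-a + T), cascadeDensity H₀ m x :=
        (periodic_cascadeDensity hper m).setLIntegral_Ioc_eq (by positivity) _ _
    _ = cascadeEnergy H₀ m := by rw [haT]; rfl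

end Cascade

theorem stmt17 (H₀ : ℝ → ℂ) (hmeas : Measurable H₀)
    (hper : ∀ γ : ℝ, H₀ (γ + 1) = H₀ γ)
    (hbound : ∀ᵐ γ : ℝ,
      ‖H₀ γ‖ ^ 2 + ‖H₀ (γ + 1/2)‖ ^ 2 ≤ 1) :
    (∀ m : ℕ, eLpNorm (cascadeFT H₀ (m + 1)) 2 volume ≤ eLpNorm (cascadeFT H₀ m) 2 volume) ∧
      ∀ m : ℕ, eLpNorm (cascadeFT H₀ m) 2 volume ≤ 1 := by
  have hmono : ∀ m, cascadeEnergy H₀ (m + 1) ≤ cascadeEnergy H₀ m :=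
    cascadeEnergy_succ_le hmeas hper (ae_enorm_sq_add_enorm_sq_le_one hbound)
  refine ⟨fun m => ?_, fun m => ?_⟩
  · simp only [eLpNorm_cascadeFT]
    gcongr
    exact hmono m
  · rw [eLpNorm_cascadeFT]
    refine ENNReal.rpow_le_one ?_ (by norm_num)
    exact (antitone_nat_of_succ_le hmono (Nat.zero_le m)).trans cascadeEnergy_zero.le
end

section
/- For real α ≥ 1 and integer 0 ≤ ℓ ≤ ⌊α-1/2⌋, let q(t) = (1-t)^α p(t) with p(t) = Σ_{k=0}^{ℓ} C(α-1+k,k) t^k. Then the function g(t) := 1 - q(t)² satisfies: g(0) = 0 and g has a zero of order exactly ℓ+1 at t = 0 when ℓ+1 < α (i.e., g(t) = c·t^{ℓ+1} + o(t^{ℓ+1}) with c ≠ 0, equivalently the limit lim_{t→0⁺} g(t)/t^{ℓ+1} exists and is nonzero). -/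
/-!
`genBinomR α k` is the `k`-th Taylor coefficient of `(1 - t) ^ (-α)` at `0`, so
`p = ∑_{k ≤ ℓ} genBinomR α k t^k` is its Taylor polynomial and `1 - q = (1 - t) ^ α R`, where
`R = (1 - t) ^ (-α) - p = genBinomR α (ℓ + 1) t^(ℓ+1) + O(t^(ℓ+2))` is the Taylor remainder.
Hence `1 - q² = (1 - q)(1 + q) ~ 2 genBinomR α (ℓ + 1) t^(ℓ+1)`, and the coefficient is
positive for `α > 0`.
-/

open Finset Real Filter

/-- `q(t) = (1-t)^α p(t)` with `p(t) = ∑_{k=0}^ℓ C(α-1+k,k) t^k`. -/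
noncomputable def qPoly (α : ℝ) (ℓ : ℕ) (t : ℝ) : ℝ :=
  (1 - t) ^ α * ∑ k ∈ range (ℓ + 1), genBinomR α k * t ^ k

open Topology Asymptotics

lemma ascPochhammer_eval_eq_prod_range {S : Type*} [CommSemiring S] (n : ℕ) (s : S) :
    (ascPochhammer S n).eval s = ∏ j ∈ range n, (s + j) := by
  induction n with
  | zero => simp
  | succ n ih => rw [ascPochhammer_succ_eval, ih, prod_range_succ]

theorem HasFPowerSeriesAt.tendsto_sub_sum_div_pow {𝕜 : Type*} [NontriviallyNormedField 𝕜]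
    {f : 𝕜 → 𝕜} {c : ℕ → 𝕜}
    (hf : HasFPowerSeriesAt f (FormalMultilinearSeries.ofScalars 𝕜 c) 0) (n : ℕ) :
    Tendsto (fun t ↦ (f t - ∑ k ∈ range (n + 1), c k * t ^ k) / t ^ (n + 1))
      (𝓝[≠] 0) (𝓝 (c (n + 1))) := by
  set g := fun t ↦ f t - ∑ k ∈ range (n + 2), c k * t ^ k
  have hg : g =O[𝓝 0] fun t ↦ ‖t‖ ^ (n + 2) := by
    simpa only [zero_add, FormalMultilinearSeries.partialSum,
      FormalMultilinearSeries.ofScalars_apply_eq, smul_eq_mul]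
      using hf.isBigO_sub_partialSum_pow (n + 2)
  obtain ⟨C, hC⟩ := hg.bound
  have hg_div : Tendsto (fun t ↦ g t / t ^ (n + 1)) (𝓝[≠] 0) (𝓝 0) := by
    have hlim : Tendsto (fun t : 𝕜 ↦ C * ‖t‖) (𝓝[≠] 0) (𝓝 0) := by
      simpa using (tendsto_norm_zero.const_mul C).mono_left nhdsWithin_le_nhds
    refine squeeze_zero_norm' ?_ hlim
    filter_upwards [nhdsWithin_le_nhds hC, self_mem_nhdsWithin] with t ht ht_ne
    have ht0 : 0 < ‖t‖ := norm_pos_iff.2 ht_ne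
    rw [norm_div, norm_pow, div_le_iff₀ (by positivity)]
    calc ‖g t‖ ≤ C * ‖‖t‖ ^ (n + 2)‖ := ht
      _ = C * ‖t‖ * ‖t‖ ^ (n + 1) := by rw [norm_pow, norm_norm]; ring
  have hsplit : ∀ t : 𝕜, t ≠ 0 → c (n + 1) + g t / t ^ (n + 1)
      = (f t - ∑ k ∈ range (n + 1), c k * t ^ k) / t ^ (n + 1) := by
    intro t ht
    simp only [g, sum_range_succ _ (n + 1)]
    field_simp
    ring
  rw [← add_zero (c (n + 1))]
  exact (hg_div.const_add (c (n + 1))).congr' (eventually_nhdsWithin_of_forall hsplit)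

lemma genBinomR_pos {α : ℝ} (hα : 0 < α) (k : ℕ) : 0 < genBinomR α k := by
  unfold genBinomR
  exact div_pos (prod_pos fun j _ ↦ by positivity) (by positivity)

lemma genBinomR_eq_choose (α : ℝ) (k : ℕ) : genBinomR α k = Ring.choose (α + k - 1) k := by
  rw [Ring.choose_eq_smul, Polynomial.descPochhammer_smeval_eq_ascPochhammer,
    Polynomial.ascPochhammer_smeval_eq_eval, ascPochhammer_eval_eq_prod_range, genBinomR,
    smul_eq_mul, div_eq_inv_mul]
  ring_nf

theorem hasFPowerSeriesAt_one_sub_rpow_neg (α : ℝ) :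
    HasFPowerSeriesAt (fun t ↦ (1 - t) ^ (-α))
      (FormalMultilinearSeries.ofScalars ℝ (genBinomR α)) 0 := by
  have hcoeff : genBinomR α = fun k : ℕ ↦ Ring.choose (α + k - 1) k :=
    funext (genBinomR_eq_choose α)
  rw [hcoeff]
  refine (one_div_one_sub_rpow_hasFPowerSeriesOnBall_zero α).hasFPowerSeriesAt.congr ?_
  filter_upwards [Iio_mem_nhds one_pos] with t ht
  rw [rpow_neg (sub_nonneg.2 (le_of_lt ht)), one_div]

lemma qPoly_zero (α : ℝ) (ℓ : ℕ) : qPoly α ℓ 0 = 1 := by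
  simp [qPoly, sum_range_succ', genBinomR]

lemma continuousAt_qPoly (α : ℝ) (ℓ : ℕ) : ContinuousAt (qPoly α ℓ) 0 := by
  unfold qPoly
  fun_prop (disch := norm_num)

lemma one_sub_qPoly {α t : ℝ} (ℓ : ℕ) (ht : t < 1) :
    1 - qPoly α ℓ t
      = (1 - t) ^ α * ((1 - t) ^ (-α) - ∑ k ∈ range (ℓ + 1), genBinomR α k * t ^ k) := by
  rw [qPoly, mul_sub, rpow_neg (by linarith), mul_inv_cancel₀ (by positivity)]

theorem stmt19_general (α : ℝ) (hα : 1 ≤ α) (ℓ : ℕ) :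
    (1 - qPoly α ℓ 0 ^ 2 = 0) ∧
      ((ℓ : ℝ) + 1 < α →
        ∃ c : ℝ, c ≠ 0 ∧
          Tendsto (fun t : ℝ => (1 - qPoly α ℓ t ^ 2) / t ^ (ℓ + 1))
            (nhdsWithin 0 (Set.Ioi 0)) (nhds c)) := by
  refine ⟨by simp [qPoly_zero], fun _ ↦ ⟨2 * genBinomR α (ℓ + 1), ?_, ?_⟩⟩
  · exact (mul_pos two_pos (genBinomR_pos (zero_lt_one.trans_le hα) _)).ne'
  have hpow : Tendsto (fun t : ℝ ↦ (1 - t) ^ α) (𝓝[>] 0) (𝓝 1) := by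
    simpa using (show ContinuousAt (fun t : ℝ ↦ (1 - t) ^ α) 0 by fun_prop (disch := norm_num))
      |>.tendsto.mono_left nhdsWithin_le_nhds
  have hrem := ((hasFPowerSeriesAt_one_sub_rpow_neg α).tendsto_sub_sum_div_pow ℓ).mono_left
    (nhdsGT_le_nhdsNE 0)
  have hq : Tendsto (fun t ↦ 1 + qPoly α ℓ t) (𝓝[>] 0) (𝓝 2) := by
    have : Tendsto (fun t ↦ 1 + qPoly α ℓ t) (𝓝[>] 0) (𝓝 (1 + qPoly α ℓ 0)) :=
      ((continuousAt_qPoly α ℓ).tendsto.const_add 1).mono_left nhdsWithin_le_nhds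
    rwa [qPoly_zero, one_add_one_eq_two] at this
  have hlim := (hpow.mul hrem).mul hq
  rw [one_mul, mul_comm] at hlim
  refine hlim.congr' ?_
  filter_upwards [Ioo_mem_nhdsGT one_pos] with t ht
  rw [show 1 - qPoly α ℓ t ^ 2 = (1 - qPoly α ℓ t) * (1 + qPoly α ℓ t) by ring,
    one_sub_qPoly ℓ ht.2]
  ring

theorem stmt19 (α : ℝ) (hα : 1 ≤ α) (ℓ : ℕ) (hℓ : (ℓ : ℝ) ≤ α - 1/2) :
    (1 - qPoly α ℓ 0 ^ 2 = 0) ∧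
      ((ℓ : ℝ) + 1 < α →
        ∃ c : ℝ, c ≠ 0 ∧
          Tendsto (fun t : ℝ => (1 - qPoly α ℓ t ^ 2) / t ^ (ℓ + 1))
            (nhdsWithin 0 (Set.Ioi 0)) (nhds c)) :=
  stmt19_general α hα ℓ
end
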